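/- Let G be obtained from a 5-cycle by attaching pendant edges so that exactly one cycle vertex u has pendant edges (at least one). Then the strong chromatic index of G equals d(u) + 2. -/

import Mathlib

open SimpleGraph

/-- Two edges of `G` are within distance at most 2: they share a vertex, or some edge of `G`
joins an endpoint of one to an endpoint of the other. -/
def EdgesNear {V : Type*} (G : SimpleGraph V) (e f : Sym2 V) : Prop :=
  (∃ x, x ∈ e ∧ x ∈ f) ∨ (∃ x y, x ∈ e ∧ y ∈ f ∧ G.Adj x y)

/-- `c` assigns distinct colours to any two distinct edges of `G` at distance at most 2. -/
def IsStrongEdgeColoringOn {V : Type*} (G : SimpleGraph V) (c : Sym2 V → ℕ) : Prop :=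
  ∀ e ∈ G.edgeSet, ∀ f ∈ G.edgeSet, e ≠ f → EdgesNear G e f → c e ≠ c f

/-- A strong edge-colouring of `G` with `k` colours. -/
def IsStrongEdgeColoring {V : Type*} (G : SimpleGraph V) (k : ℕ) (c : Sym2 V → ℕ) : Prop :=
  (∀ e ∈ G.edgeSet, c e < k) ∧ IsStrongEdgeColoringOn G c

/-- The strong chromatic index of `G`. -/
noncomputable def sci {V : Type*} (G : SimpleGraph V) : ℕ :=
  sInf {k | ∃ c : Sym2 V → ℕ, IsStrongEdgeColoring G k c}

/-- Degree of a vertex (cardinality of its neighbour set). -/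
noncomputable def sdeg {V : Type*} (G : SimpleGraph V) (v : V) : ℕ :=
  (G.neighborSet v).ncard

/-- The graph obtained from the cycle `C_n` (on vertices `Sum.inl i`, `i : Fin n`)
by attaching `p i` pendant edges at the cycle vertex `i` (the pendant neighbours of `i`
are the vertices `Sum.inr ⟨i, x⟩`). -/
def pufferGraph (n : ℕ) (p : Fin n → ℕ) :
    SimpleGraph (Fin n ⊕ Σ i : Fin n, Fin (p i)) :=
  SimpleGraph.fromRel (fun a b =>
    (∃ i j : Fin n, a = Sum.inl i ∧ b = Sum.inl j ∧ (SimpleGraph.cycleGraph n).Adj i j) ∨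
    (∃ (i : Fin n) (x : Fin (p i)), a = Sum.inl i ∧ b = Sum.inr ⟨i, x⟩))

open Classical in
/-- The maximum of `d(u) + d(v)` over the edges `uv` of the cycle of `pufferGraph n p`. -/
noncomputable def maxCycleDegSum (n : ℕ) (p : Fin n → ℕ) : ℕ :=
  Finset.univ.sup fun q : Fin n × Fin n =>
    if (SimpleGraph.cycleGraph n).Adj q.1 q.2 then
      sdeg (pufferGraph n p) (Sum.inl q.1) + sdeg (pufferGraph n p) (Sum.inl q.2)
    else 0

/-!
The `p u` pendant edges and the four cycle edges other than the one opposite `u` are pairwise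
within distance 2, so at least `p u + 4 = d(u) + 2` colours are needed. Conversely, colour the
cycle edges `0, …, 4` by their opposite vertices, the one opposite `u` getting `4`, and the
pendant edges `4, 5, …`: the only shared colour is between the edge opposite `u` and a pendant
edge, and these are at distance 3.
-/

open Function

section StrongEdgeColoring

variable {V W : Type*} {G : SimpleGraph V} {H : SimpleGraph W}

theorem EdgesNear.symm {e f : Sym2 V} (h : EdgesNear G e f) : EdgesNear G f e := by
  rcases h with ⟨x, hxe, hxf⟩ | ⟨x, y, hxe, hyf, hxy⟩
  exacts [Or.inl ⟨x, hxf, hxe⟩, Or.inr ⟨y, x, hyf, hxe, hxy.symm⟩]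

theorem EdgesNear.map (φ : G →g H) {e f : Sym2 V} (h : EdgesNear G e f) :
    EdgesNear H (e.map φ) (f.map φ) := by
  rcases h with ⟨x, hxe, hxf⟩ | ⟨x, y, hxe, hyf, hxy⟩
  · exact Or.inl ⟨φ x, Sym2.mem_map.2 ⟨x, hxe, rfl⟩, Sym2.mem_map.2 ⟨x, hxf, rfl⟩⟩
  · exact Or.inr ⟨φ x, φ y, Sym2.mem_map.2 ⟨x, hxe, rfl⟩, Sym2.mem_map.2 ⟨y, hyf, rfl⟩,
      φ.map_adj hxy⟩

theorem sci_le {k : ℕ} {c : Sym2 V → ℕ} (hc : IsStrongEdgeColoring G k c) : sci G ≤ k :=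
  Nat.sInf_le ⟨c, hc⟩

theorem exists_isStrongEdgeColoring_sci [Finite V] (G : SimpleGraph V) :
    ∃ c, IsStrongEdgeColoring G (sci G) c := by
  obtain ⟨n, ⟨enum⟩⟩ := Finite.exists_equiv_fin (Sym2 V)
  have hn : ∃ c, IsStrongEdgeColoring G n c :=
    ⟨fun e => enum e, fun e _ => (enum e).isLt,
      fun _ _ _ _ hef _ h => hef (enum.injective (Fin.ext h))⟩
  exact Nat.sInf_mem (s := {k | ∃ c, IsStrongEdgeColoring G k c}) ⟨n, hn⟩

theorem IsStrongEdgeColoring.card_le {k : ℕ} {c : Sym2 V → ℕ} (hc : IsStrongEdgeColoring G k c)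
    {ι : Type*} [Fintype ι] {e : ι → Sym2 V} (he : ∀ i, e i ∈ G.edgeSet) (he_inj : Injective e)
    (hnear : ∀ i j, i ≠ j → EdgesNear G (e i) (e j)) : Fintype.card ι ≤ k := by
  refine (Fintype.card_le_of_injective (fun i => (⟨c (e i), hc.1 _ (he i)⟩ : Fin k)) ?_).trans_eq
    (Fintype.card_fin k)
  intro i j hij
  by_contra hne
  exact hc.2 _ (he i) _ (he j) (he_inj.ne hne) (hnear i j hne) (Fin.mk.inj hij)

theorem card_le_sci [Finite V] {ι : Type*} [Fintype ι] {e : ι → Sym2 V}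
    (he : ∀ i, e i ∈ G.edgeSet) (he_inj : Injective e)
    (hnear : ∀ i j, i ≠ j → EdgesNear G (e i) (e j)) : Fintype.card ι ≤ sci G :=
  have ⟨_, hc⟩ := exists_isStrongEdgeColoring_sci G
  hc.card_le he he_inj hnear

end StrongEdgeColoring

namespace pufferGraph

variable {n : ℕ} {p : Fin n → ℕ}

@[simp]
theorem adj_inl_inl {i j : Fin n} :
    (pufferGraph n p).Adj (.inl i) (.inl j) ↔ (cycleGraph n).Adj i j := by
  simp only [pufferGraph, fromRel_adj]
  constructor
  · rintro ⟨-, (⟨i', j', ⟨⟩, ⟨⟩, h⟩ | ⟨_, _, -, ⟨⟩⟩) | (⟨i', j', ⟨⟩, ⟨⟩, h⟩ | ⟨_, _, -, ⟨⟩⟩)⟩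
    exacts [h, h.symm]
  · exact fun h => ⟨by simpa using h.ne, .inl (.inl ⟨i, j, rfl, rfl, h⟩)⟩

@[simp]
theorem adj_inl_inr {i j : Fin n} {x : Fin (p j)} :
    (pufferGraph n p).Adj (.inl i) (.inr ⟨j, x⟩) ↔ i = j := by
  simp only [pufferGraph, fromRel_adj]
  constructor
  · rintro ⟨-, (⟨_, _, -, ⟨⟩, -⟩ | ⟨_, _, ⟨⟩, ⟨⟩⟩) | (⟨_, _, ⟨⟩, -, -⟩ | ⟨_, _, ⟨⟩, -⟩)⟩
    rfl
  · rintro rfl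
    exact ⟨by simp, .inl (.inr ⟨i, x, rfl, rfl⟩)⟩

@[simp]
theorem adj_inr_inl {i j : Fin n} {x : Fin (p j)} :
    (pufferGraph n p).Adj (.inr ⟨j, x⟩) (.inl i) ↔ i = j := by
  rw [adj_comm, adj_inl_inr]

@[simp]
theorem not_adj_inr_inr {a b : Σ i : Fin n, Fin (p i)} :
    ¬ (pufferGraph n p).Adj (.inr a) (.inr b) := by
  simp only [pufferGraph, fromRel_adj]
  rintro ⟨-, (⟨_, _, ⟨⟩, -, -⟩ | ⟨_, _, ⟨⟩, -⟩) | (⟨_, _, ⟨⟩, -, -⟩ | ⟨_, _, ⟨⟩, -⟩)⟩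

def cycleEmbedding : cycleGraph n ↪g pufferGraph n p where
  toEmbedding := .inl
  map_rel_iff' := adj_inl_inl

@[simp]
theorem cycleEmbedding_apply (i : Fin n) : cycleEmbedding (p := p) i = .inl i := rfl

theorem edge_cases {e : Sym2 (Fin n ⊕ Σ i : Fin n, Fin (p i))}
    (he : e ∈ (pufferGraph n p).edgeSet) :
    (∃ i j, (cycleGraph n).Adj i j ∧ e = s(.inl i, .inl j)) ∨
      ∃ i, ∃ x : Fin (p i), e = s(.inl i, .inr ⟨i, x⟩) := by
  induction e with
  | h a b =>
    rw [mem_edgeSet] at he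
    rcases a with i | ⟨j, x⟩ <;> rcases b with j | ⟨j', y⟩
    · exact .inl ⟨i, j, adj_inl_inl.1 he, rfl⟩
    · obtain rfl := adj_inl_inr.1 he
      exact .inr ⟨i, y, rfl⟩
    · obtain rfl := adj_inr_inl.1 he
      exact .inr ⟨j, x, Sym2.eq_swap⟩
    · exact absurd he not_adj_inr_inr

theorem neighborSet_inl (i : Fin n) :
    (pufferGraph n p).neighborSet (.inl i) =
      Sum.inl '' (cycleGraph n).neighborSet i ∪ Set.range fun x : Fin (p i) => .inr ⟨i, x⟩ := by
  ext (j | ⟨j, x⟩)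
  · simp
  · simp only [mem_neighborSet, adj_inl_inr, Set.mem_union, Set.mem_image, reduceCtorEq,
      and_false, exists_false, Set.mem_range, Sum.inr.injEq, false_or]
    constructor
    · rintro rfl
      exact ⟨x, rfl⟩
    · rintro ⟨y, hy⟩
      exact congrArg Sigma.fst hy

theorem edgesNear_inl_pendant_iff {i j v : Fin n} {x : Fin (p v)} :
    EdgesNear (pufferGraph n p) s(.inl i, .inl j) s(.inl v, .inr ⟨v, x⟩) ↔
      i = v ∨ j = v ∨ (cycleGraph n).Adj i v ∨ (cycleGraph n).Adj j v := by
  simp only [EdgesNear, Sym2.mem_iff, or_and_right, exists_or, ↓existsAndEq, Sum.inl.injEq,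
    reduceCtorEq, or_false, true_and, Sum.exists, adj_inl_inl, false_and,
    Sum.inr.injEq, false_or, adj_inl_inr]
  tauto

end pufferGraph

theorem pufferGraph.sdeg_inl {m : ℕ} {p : Fin (m + 3) → ℕ} (i : Fin (m + 3)) :
    sdeg (pufferGraph (m + 3) p) (.inl i) = p i + 2 := by
  rw [sdeg, neighborSet_inl, Set.ncard_union_eq, Set.ncard_image_of_injective _ Sum.inl_injective,
    Set.ncard_range_of_injective, ← Nat.card_coe_set_eq, Nat.card_eq_fintype_card,
    card_neighborSet_eq_degree, cycleGraph_degree_three_le, Nat.card_eq_fintype_card,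
    Fintype.card_fin, add_comm]
  · intro x y hxy
    simpa using hxy
  · simp [Set.disjoint_left]

/-- For an edge `ij` of `C₅`, the vertex at distance 2 from both `i` and `j`. -/
def fiveCycleOpposite (i j : Fin 5) : Fin 5 := 3 * (i + j)

theorem fiveCycleOpposite_eq_iff : ∀ {i j v : Fin 5}, (cycleGraph 5).Adj i j →
    (fiveCycleOpposite i j = v ↔
      ¬ (i = v ∨ j = v ∨ (cycleGraph 5).Adj i v ∨ (cycleGraph 5).Adj j v)) := by
  unfold fiveCycleOpposite; decide

theorem fiveCycleOpposite_injective : ∀ {i j i' j' : Fin 5}, (cycleGraph 5).Adj i j →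
    (cycleGraph 5).Adj i' j' → fiveCycleOpposite i j = fiveCycleOpposite i' j' →
      s(i, j) = s(i', j') := by
  unfold fiveCycleOpposite; decide

theorem cycleGraph_five_adj_add_one : ∀ a : Fin 5, (cycleGraph 5).Adj a (a + 1) := by decide

theorem cycleGraph_five_edgesNear :
    ∀ a b : Fin 5, EdgesNear (cycleGraph 5) s(a, a + 1) s(b, b + 1) := by
  unfold EdgesNear; decide

theorem card_not_fiveCycleOpposite :
    ∀ u : Fin 5, Fintype.card {a // fiveCycleOpposite a (a + 1) ≠ u} = 4 := by
  unfold fiveCycleOpposite; decide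

section FiveCycle

variable (p : Fin 5 → ℕ) (u : Fin 5)

/-- Cycle edges are coloured by their opposite vertex, rotated so that the edge opposite `u`,
which is far from every pendant edge, shares colour `4` with the first pendant edge. -/
def fiveCycleColoring : Sym2 (Fin 5 ⊕ Σ i : Fin 5, Fin (p i)) → ℕ :=
  Sym2.lift ⟨fun a b => match a, b with
    | .inl i, .inl j => (fiveCycleOpposite i j - u - 1 : Fin 5).val
    | .inl _, .inr ⟨_, x⟩ => x + 4
    | .inr ⟨_, x⟩, .inl _ => x + 4
    | .inr _, .inr _ => 0,
    by rintro (i | ⟨_, x⟩) (j | ⟨_, y⟩) <;> simp [fiveCycleOpposite, add_comm]⟩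

variable {p u}

@[simp]
theorem fiveCycleColoring_inl_inl (i j : Fin 5) :
    fiveCycleColoring p u s(.inl i, .inl j) = (fiveCycleOpposite i j - u - 1 : Fin 5).val := rfl

@[simp]
theorem fiveCycleColoring_pendant (i : Fin 5) (x : Fin (p i)) :
    fiveCycleColoring p u s(.inl i, .inr ⟨i, x⟩) = x + 4 := rfl

theorem fiveCycleColoring_ne_pendant {i j : Fin 5} (hij : (cycleGraph 5).Adj i j) (x : Fin (p u))
    (hnear : EdgesNear (pufferGraph 5 p) s(.inl i, .inl j) s(.inl u, .inr ⟨u, x⟩)) :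
    fiveCycleColoring p u s(.inl i, .inl j) ≠ fiveCycleColoring p u s(.inl u, .inr ⟨u, x⟩) := by
  have sub_sub_one_val_eq_four : ∀ a u : Fin 5, (a - u - 1).val = 4 → a = u := by decide
  intro hc
  rw [fiveCycleColoring_inl_inl, fiveCycleColoring_pendant] at hc
  have := (fiveCycleOpposite i j - u - 1).isLt
  have hopp := sub_sub_one_val_eq_four (fiveCycleOpposite i j) u (by omega)
  exact (fiveCycleOpposite_eq_iff hij).1 hopp (pufferGraph.edgesNear_inl_pendant_iff.1 hnear)

theorem isStrongEdgeColoring_fiveCycleColoring (hu : 1 ≤ p u) (h : ∀ i, i ≠ u → p i = 0) :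
    IsStrongEdgeColoring (pufferGraph 5 p) (p u + 4) (fiveCycleColoring p u) := by
  have pendant_at_u (i : Fin 5) (x : Fin (p i)) : i = u := by
    by_contra hi
    exact absurd x.isLt (by simp [h i hi])
  refine ⟨fun e he => ?_, fun e he f hf hne hnear => ?_⟩
  · rcases pufferGraph.edge_cases he with ⟨i, j, -, rfl⟩ | ⟨i, x, rfl⟩
    · exact (Fin.isLt _).trans_le (by omega)
    · obtain rfl := pendant_at_u i x
      simp [x.isLt]
  rcases pufferGraph.edge_cases he with ⟨i, j, hij, rfl⟩ | ⟨i, x, rfl⟩ <;>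
    rcases pufferGraph.edge_cases hf with ⟨i', j', hij', rfl⟩ | ⟨i', y, rfl⟩
  · intro hc
    apply hne
    have hopp : fiveCycleOpposite i j = fiveCycleOpposite i' j' := by
      simpa using Fin.ext hc
    simpa [Sym2.eq_iff] using fiveCycleOpposite_injective hij hij' hopp
  · obtain rfl := pendant_at_u i' y
    exact fiveCycleColoring_ne_pendant hij y hnear
  · obtain rfl := pendant_at_u i x
    exact (fiveCycleColoring_ne_pendant hij' x hnear.symm).symm
  · obtain rfl := pendant_at_u i x
    obtain rfl := pendant_at_u i' y
    intro hc
    exact hne (by simp_all [Fin.ext_iff])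

end FiveCycle

/-- The pendant edges at `u` together with the four cycle edges not opposite `u`
are pairwise within distance 2. -/
theorem pufferGraph_five_add_four_le_sci (p : Fin 5 → ℕ) (u : Fin 5) :
    p u + 4 ≤ sci (pufferGraph 5 p) := by
  let e : {a // fiveCycleOpposite a (a + 1) ≠ u} ⊕ Fin (p u) → Sym2 (Fin 5 ⊕ Σ i, Fin (p i)) :=
    Sum.elim (fun a => s(.inl a.1, .inl (a.1 + 1))) (fun x => s(.inl u, .inr ⟨u, x⟩))
  have he : ∀ m, e m ∈ (pufferGraph 5 p).edgeSet := by
    rintro (a | x)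
    · exact pufferGraph.adj_inl_inl.2 (cycleGraph_five_adj_add_one a)
    · exact pufferGraph.adj_inl_inr.2 rfl
  have he_inj : Injective e := by
    have add_one_inj : ∀ a b : Fin 5, s(a, a + 1) = s(b, b + 1) → a = b := by decide
    rintro (a | x) (b | y) hab
    · exact congrArg _ (Subtype.ext (add_one_inj a b (by simpa [e, Sym2.eq_iff] using hab)))
    · simp [e] at hab
    · simp [e] at hab
    · exact congrArg _ (by simpa [e] using hab)
  have hnear : ∀ m m', m ≠ m' → EdgesNear (pufferGraph 5 p) (e m) (e m') := by
    have cycle_near (a : {a // fiveCycleOpposite a (a + 1) ≠ u}) (x : Fin (p u)) :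
        EdgesNear (pufferGraph 5 p) (e (.inl a)) (e (.inr x)) := by
      refine pufferGraph.edgesNear_inl_pendant_iff.2 ?_
      exact not_not.1 (mt (fiveCycleOpposite_eq_iff (cycleGraph_five_adj_add_one a)).2 a.2)
    rintro (a | x) (b | y) -
    · simpa [e] using (cycleGraph_five_edgesNear a b).map pufferGraph.cycleEmbedding.toHom
    · exact cycle_near a y
    · exact (cycle_near b x).symm
    · exact .inl ⟨.inl u, Sym2.mem_mk_left _ _, Sym2.mem_mk_left _ _⟩
  have hcard := card_le_sci he he_inj hnear
  rwa [Fintype.card_sum, card_not_fiveCycleOpposite, Fintype.card_fin, add_comm] at hcard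

/-- For a 5-cycle with pendant edges attached at exactly one cycle vertex `u`
(at least one pendant edge), the strong chromatic index equals `d(u) + 2`. -/
theorem sci_C5_one_pendant_vertex (p : Fin 5 → ℕ) (u : Fin 5)
    (hu : 1 ≤ p u) (h : ∀ i, i ≠ u → p i = 0) :
    sci (pufferGraph 5 p) = sdeg (pufferGraph 5 p) (Sum.inl u) + 2 := by
  rw [pufferGraph.sdeg_inl (m := 2)]
  exact le_antisymm (sci_le (isStrongEdgeColoring_fiveCycleColoring hu h))
    (pufferGraph_five_add_four_le_sci p u)
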